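/- arXiv:2410.20776 — 2 statements merged into one kernel-verified Lean document; each statement's English description precedes it below -/
import Mathlib

section
/- For λ ∈ (0,1), removing a single point x from the compact real tree T leaves a connected space if and only if x belongs to the boundary set Σ = T \ T^o; i.e., Σ is exactly the set of leaves of T. -/
open scoped Classical

/-- Height `b(i,j)` at which the rays `i` and `j` branch in the binary real tree with edge
lengths `λ^m` at depth `m`: the sum of `λ^k` over the edges shared by the two rays. -/
noncomputable def branchHt (lam : ℝ) (i j : ℕ → Bool) : ℝ :=
  ∑' k : ℕ, if ∀ m ≤ k, i m = j m then lam ^ k else 0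

/-- Total height `L = Σ_m λ^m = 1/(1-λ)` of the tree. -/
noncomputable def treeHt (lam : ℝ) : ℝ := 1 / (1 - lam)

/-- Height `Σ_{k<n} λ^k = (1-λⁿ)/(1-λ)` of a depth-`n` vertex. -/
noncomputable def vertexHt (lam : ℝ) (n : ℕ) : ℝ := (1 - lam ^ n) / (1 - lam)

/-- The distance in the binary real tree between the point at height `h` on the ray `i`
and the point at height `h'` on the ray `j`. -/
noncomputable def treeDist (lam : ℝ) (i j : ℕ → Bool) (h h' : ℝ) : ℝ :=
  h + h' - 2 * min (min h h') (branchHt lam i j)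

/-- The point of `T` at height `h` on the ray `i`; `IsTreeParam` says that the metric space
`T` is (isometric to) the completed binary real tree with edge lengths `λ^m` at depth `m`,
parametrized by `p`. -/
structure IsTreeParam (lam : ℝ) {T : Type*} [MetricSpace T]
    (p : (ℕ → Bool) → ℝ → T) : Prop where
  dist_eq : ∀ (i j : ℕ → Bool) (h h' : ℝ), h ∈ Set.Icc 0 (treeHt lam) →
    h' ∈ Set.Icc 0 (treeHt lam) → dist (p i h) (p j h') = treeDist lam i j h h'
  surj : ∀ x : T, ∃ (i : ℕ → Bool) (h : ℝ), h ∈ Set.Icc 0 (treeHt lam) ∧ p i h = x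

/-- The uncompleted tree `T^o`: points at height strictly less than `L = 1/(1-λ)`. -/
def treeInterior (lam : ℝ) {T : Type*} [MetricSpace T]
    (p : (ℕ → Bool) → ℝ → T) : Set T :=
  {x : T | ∃ (i : ℕ → Bool) (h : ℝ), 0 ≤ h ∧ h < treeHt lam ∧ p i h = x}

section helpers
variable {lam : ℝ}

lemma if_summable (h0 : 0 ≤ lam) (h1 : lam < 1) (i j : ℕ → Bool) :
    Summable (fun k => if ∀ m ≤ k, i m = j m then lam ^ k else 0) := by
  refine Summable.of_nonneg_of_le (fun k => ?_) (fun k => ?_)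
    (summable_geometric_of_lt_one h0 h1)
  · by_cases h : ∀ m ≤ k, i m = j m
    · rw [if_pos h]; exact pow_nonneg h0 k
    · rw [if_neg h]
  · by_cases h : ∀ m ≤ k, i m = j m
    · rw [if_pos h]
    · rw [if_neg h]; exact pow_nonneg h0 k

lemma branch_nonneg (h0 : 0 ≤ lam) (i j : ℕ → Bool) : 0 ≤ branchHt lam i j := by
  unfold branchHt
  refine tsum_nonneg (fun k => ?_)
  by_cases h : ∀ m ≤ k, i m = j m
  · rw [if_pos h]; exact pow_nonneg h0 k
  · rw [if_neg h]

lemma geom_treeHt (h0 : 0 ≤ lam) (h1 : lam < 1) : (∑' k : ℕ, lam ^ k) = treeHt lam := by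
  rw [tsum_geometric_of_lt_one h0 h1, treeHt, one_div]

lemma branch_le (h0 : 0 ≤ lam) (h1 : lam < 1) (i j : ℕ → Bool) :
    branchHt lam i j ≤ treeHt lam := by
  unfold branchHt
  rw [← geom_treeHt h0 h1]
  refine Summable.tsum_le_tsum (fun k => ?_) (if_summable h0 h1 i j)
    (summable_geometric_of_lt_one h0 h1)
  by_cases h : ∀ m ≤ k, i m = j m
  · rw [if_pos h]
  · rw [if_neg h]; exact pow_nonneg h0 k

lemma branch_self (h0 : 0 ≤ lam) (h1 : lam < 1) (i : ℕ → Bool) :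
    branchHt lam i i = treeHt lam := by
  unfold branchHt
  rw [← geom_treeHt h0 h1]
  exact tsum_congr (fun k => by simp)

lemma branch_comm (i j : ℕ → Bool) : branchHt lam i j = branchHt lam j i := by
  unfold branchHt
  refine tsum_congr (fun k => ?_)
  congr 1
  simp only [eq_iff_iff]
  exact ⟨fun h m hm => (h m hm).symm, fun h m hm => (h m hm).symm⟩

lemma dc_total {P Q : ℕ → Prop} (hP : ∀ ⦃m n : ℕ⦄, m ≤ n → P n → P m)
    (hQ : ∀ ⦃m n : ℕ⦄, m ≤ n → Q n → Q m) :
    (∀ n, P n → Q n) ∨ (∀ n, Q n → P n) := by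
  by_cases h : ∀ n, P n → Q n
  · exact Or.inl h
  · push_neg at h
    obtain ⟨a, hPa, hQa⟩ := h
    refine Or.inr (fun n hQn => ?_)
    rcases le_total n a with hna | han
    · exact hP hna hPa
    · exact absurd (hQ han hQn) hQa

lemma branch_mono (h0 : 0 ≤ lam) (h1 : lam < 1) {i j i' j' : ℕ → Bool}
    (h : ∀ k, (∀ m ≤ k, i m = j m) → (∀ m ≤ k, i' m = j' m)) :
    branchHt lam i j ≤ branchHt lam i' j' := by
  unfold branchHt
  refine Summable.tsum_le_tsum (fun k => ?_) (if_summable h0 h1 i j) (if_summable h0 h1 i' j')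
  by_cases hP : ∀ m ≤ k, i m = j m
  · rw [if_pos hP, if_pos (h k hP)]
  · rw [if_neg hP]
    by_cases hQ : ∀ m ≤ k, i' m = j' m
    · rw [if_pos hQ]; exact pow_nonneg h0 k
    · rw [if_neg hQ]

lemma branch_ultra (h0 : 0 ≤ lam) (h1 : lam < 1) (i j k : ℕ → Bool) :
    min (branchHt lam i k) (branchHt lam k j) ≤ branchHt lam i j := by
  have hdc : ∀ (a b : ℕ → Bool), ∀ ⦃m n : ℕ⦄, m ≤ n → (∀ m' ≤ n, a m' = b m') →
      (∀ m' ≤ m, a m' = b m') := fun a b m n hmn h m' hm' => h m' (hm'.trans hmn)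
  rcases dc_total (hdc i k) (hdc k j) with H | H
  · refine le_trans (min_le_left _ _) (branch_mono h0 h1 (fun n hn m hm => ?_))
    rw [hn m hm]; exact H n hn m hm
  · refine le_trans (min_le_right _ _) (branch_mono h0 h1 (fun n hn m hm => ?_))
    rw [← hn m hm]; exact H n hn m hm

lemma branch_flip (lam : ℝ) (i : ℕ → Bool) : branchHt lam i (fun n => !(i n)) = 0 := by
  unfold branchHt
  have : (fun k : ℕ => if ∀ m ≤ k, i m = (fun n => !(i n)) m then lam ^ k else 0)
      = fun _ => (0 : ℝ) := by
    funext k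
    rw [if_neg]
    intro h
    simpa using h 0 (Nat.zero_le k)
  rw [this, tsum_zero]

lemma two_min_abs (a b : ℝ) : a + b - 2 * min a b = |a - b| := by
  rcases le_total a b with h | h
  · rw [min_eq_left h, abs_of_nonpos (by linarith)]; ring
  · rw [min_eq_right h, abs_of_nonneg (by linarith)]; ring

lemma min3_helper {a b c : ℝ} (h : min a c ≤ b) : min (min a b) c = min a c := by
  rw [min_right_comm]; exact min_eq_left h

end helpers

/-- For `λ ∈ (0,1)`, removing a single point `x` from the compact real tree `T` leaves a
connected space iff `x` belongs to the boundary set `Σ = T \ T^o`; i.e. `Σ` is exactly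
the set of leaves of `T`. -/
theorem stmt_6 (lam : ℝ) (hlam : lam ∈ Set.Ioo (0 : ℝ) 1)
    {T : Type*} [MetricSpace T] (p : (ℕ → Bool) → ℝ → T) (hp : IsTreeParam lam p) :
    ∀ x : T, IsConnected ({x}ᶜ : Set T) ↔ x ∉ treeInterior lam p := by
  obtain ⟨hl0, hl1⟩ := hlam
  have h0 : (0 : ℝ) ≤ lam := hl0.le
  have hL : 0 < treeHt lam := by
    rw [treeHt]
    exact div_pos one_pos (by linarith)
  -- distance formula
  have hd : ∀ (i j : ℕ → Bool) (a b : ℝ), 0 ≤ a → a ≤ treeHt lam → 0 ≤ b →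
      b ≤ treeHt lam →
      dist (p i a) (p j b) = a + b - 2 * min (min a b) (branchHt lam i j) := by
    intro i j a b ha ha' hb hb'
    rw [hp.dist_eq i j a b ⟨ha, ha'⟩ ⟨hb, hb'⟩]
    rfl
  -- distance along a single ray
  have hself : ∀ (j : ℕ → Bool) (a b : ℝ), 0 ≤ a → a ≤ treeHt lam → 0 ≤ b →
      b ≤ treeHt lam → dist (p j a) (p j b) = |a - b| := by
    intro j a b ha ha' hb hb'
    rw [hd j j a b ha ha' hb hb', branch_self h0 hl1 j,
      min_eq_left (le_trans (min_le_left a b) ha'), two_min_abs]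
  -- common root
  have hroot : ∀ i j : ℕ → Bool, p i 0 = p j 0 := by
    intro i j
    apply eq_of_dist_eq_zero
    rw [hd i j 0 0 le_rfl hL.le le_rfl hL.le, min_self,
      min_eq_left (branch_nonneg h0 i j)]
    ring
  intro x
  constructor
  · -- connected → not interior
    intro hc hxin
    obtain ⟨i, h, hh0, hhL, hxe⟩ := hxin
    have hhL' : h ≤ treeHt lam := hhL.le
    -- distance from the leaf above x to x
    have hdzx : dist (p i (treeHt lam)) x = treeHt lam - h := by
      rw [← hxe, hd i i (treeHt lam) h hL.le le_rfl hh0 hhL',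
        branch_self h0 hl1 i, min_eq_right hhL', min_eq_left hhL']
      ring
    set U : Set T :=
      {y : T | dist y (p i (treeHt lam)) + h < dist y x + treeHt lam} with hU_def
    set S : Set T :=
      {y : T | dist y x + treeHt lam ≤ dist y (p i (treeHt lam)) + h ∧ y ≠ x} with hS_def
    set V : Set T := ⋃ y ∈ S, Metric.ball y (dist y x) with hV_def
    have hUopen : IsOpen U :=
      isOpen_lt ((continuous_id.dist continuous_const).add continuous_const)
        ((continuous_id.dist continuous_const).add continuous_const)
    have hVopen : IsOpen V :=
      isOpen_iUnion fun y => isOpen_iUnion fun _ => Metric.isOpen_ball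
    -- metric characterization of the "below/branching away" side
    have key : ∀ (j : ℕ → Bool) (h' : ℝ), 0 ≤ h' → h' ≤ treeHt lam →
        (dist (p j h') x + treeHt lam ≤ dist (p j h') (p i (treeHt lam)) + h ↔
          min h' (branchHt lam j i) ≤ h) := by
      intro j h' h'0 h'L
      rw [← hxe, hd j i h' h h'0 h'L hh0 hhL',
        hd j i h' (treeHt lam) h'0 h'L hL.le le_rfl, min_eq_left h'L]
      constructor
      · intro hle
        have h1 : min (min h' h) (branchHt lam j i) ≤ min h' h := min_le_left _ _
        have h2 : min h' h ≤ h := min_le_right _ _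
        linarith
      · intro hm
        rw [min3_helper hm]
        linarith
    -- points of V are not in U
    have hVnotU : ∀ v ∈ V, v ∉ U := by
      intro v hv hvU
      simp only [hV_def, Set.mem_iUnion] at hv
      obtain ⟨y, hyS, hyb⟩ := hv
      obtain ⟨j, h', ⟨hj0, hjL⟩, hyeq⟩ := hp.surj y
      obtain ⟨k, h'', ⟨hk0, hkL⟩, hveq⟩ := hp.surj v
      subst hyeq hveq
      have hm : min h' (branchHt lam j i) ≤ h := (key j h' hj0 hjL).1 hyS.1
      have hnot : ¬ min h'' (branchHt lam k i) ≤ h := by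
        intro hcon
        exact absurd hvU (not_lt.2 ((key k h'' hk0 hkL).2 hcon))
      obtain ⟨hh''₁, hB3⟩ := lt_min_iff.mp (not_le.1 hnot)
      have hball : dist (p k h'') (p j h') < dist (p j h') x := Metric.mem_ball.mp hyb
      rw [← hxe, hd j i h' h hj0 hjL hh0 hhL', min3_helper hm,
        hd k j h'' h' hk0 hkL hj0 hjL] at hball
      rcases le_total h' (branchHt lam j i) with hcase | hcase
      · rw [min_eq_left hcase] at hm hball
        have hMle : min (min h'' h') (branchHt lam k j) ≤ h' :=
          le_trans (min_le_left _ _) (min_le_right _ _)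
        linarith
      · rw [min_eq_right hcase] at hm hball
        have hMB2 : min (min h'' h') (branchHt lam k j) ≤ branchHt lam k j :=
          min_le_right _ _
        have hMA : branchHt lam j i < min (min h'' h') (branchHt lam k j) := by
          linarith
        have hu : min (branchHt lam j k) (branchHt lam k i) ≤ branchHt lam j i :=
          branch_ultra h0 hl1 j i k
        rw [branch_comm j k] at hu
        have : branchHt lam j i < min (branchHt lam k j) (branchHt lam k i) :=
          lt_min (lt_of_lt_of_le hMA hMB2) (lt_of_le_of_lt hm hB3)
        linarith
    -- the leaf above x lies in U
    have hzx : p i (treeHt lam) ≠ x := by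
      refine dist_pos.mp ?_
      rw [hdzx]; linarith
    have hzU : p i (treeHt lam) ∈ U := by
      simp only [hU_def, Set.mem_setOf_eq, dist_self, zero_add]
      rw [hdzx]; linarith
    -- the opposite leaf lies in V
    have hwflip : branchHt lam (fun n => !(i n)) i = 0 := by
      rw [branch_comm, branch_flip]
    have hdwx : dist (p (fun n => !(i n)) (treeHt lam)) x = treeHt lam + h := by
      rw [← hxe, hd _ i (treeHt lam) h hL.le le_rfl hh0 hhL', hwflip,
        min_eq_right (le_min hL.le hh0)]
      ring
    have hwx : p (fun n => !(i n)) (treeHt lam) ≠ x := by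
      refine dist_pos.mp ?_
      rw [hdwx]; linarith
    have hwS : p (fun n => !(i n)) (treeHt lam) ∈ S := by
      refine ⟨(key _ (treeHt lam) hL.le le_rfl).2 ?_, hwx⟩
      rw [hwflip, min_eq_right hL.le]
      exact hh0
    have hwV : p (fun n => !(i n)) (treeHt lam) ∈ V := by
      simp only [hV_def, Set.mem_iUnion]
      refine ⟨_, hwS, ?_⟩
      rw [Metric.mem_ball, dist_self, hdwx]
      linarith
    -- cover
    have hcover : ({x}ᶜ : Set T) ⊆ U ∪ V := by
      intro y hy
      by_cases hyU : y ∈ U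
      · exact Or.inl hyU
      · refine Or.inr ?_
        have hyS : y ∈ S := by
          refine ⟨?_, hy⟩
          simp only [hU_def, Set.mem_setOf_eq, not_lt] at hyU
          exact hyU
        simp only [hV_def, Set.mem_iUnion]
        exact ⟨y, hyS, by rw [Metric.mem_ball, dist_self]; exact dist_pos.2 hy⟩
    obtain ⟨v, hvs, hvU, hvV⟩ :=
      hc.isPreconnected U V hUopen hVopen hcover ⟨p i (treeHt lam), hzx, hzU⟩
        ⟨p (fun n => !(i n)) (treeHt lam), hwx, hwV⟩
    exact hVnotU v hvV hvU
  · -- not interior → connected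
    intro hx
    obtain ⟨i₀, h₀, ⟨hh0, hhL⟩, hxe⟩ := hp.surj x
    have hLe : h₀ = treeHt lam := by
      by_contra hne
      exact hx ⟨i₀, h₀, hh0, lt_of_le_of_ne hhL hne, hxe⟩
    subst hLe
    refine ⟨⟨p i₀ 0, ?_⟩, ?_⟩
    · -- the root is different from x
      intro hmem
      rw [Set.mem_singleton_iff] at hmem
      have : dist (p i₀ 0) x = treeHt lam := by
        rw [← hxe, hself i₀ 0 (treeHt lam) le_rfl hL.le hL.le le_rfl]
        rw [abs_of_nonpos (by linarith)]; ring
      rw [hmem, dist_self] at this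
      linarith
    · refine isPreconnected_of_forall (p i₀ 0) ?_
      intro y hy
      obtain ⟨j, h', ⟨h'0, h'L⟩, hye⟩ := hp.surj y
      refine ⟨p j '' Set.Icc 0 h', ?_, ?_, ?_, ?_⟩
      · -- the arc misses x
        rintro z ⟨s, ⟨hs0, hsh⟩, rfl⟩
        intro hz
        rw [Set.mem_singleton_iff] at hz
        have hsL : s ≤ treeHt lam := hsh.trans h'L
        have hzero : dist (p j s) x = 0 := by rw [hz, dist_self]
        rw [← hxe, hd j i₀ s (treeHt lam) hs0 hsL hL.le le_rfl,
          min_eq_left hsL] at hzero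
        have hmb : min s (branchHt lam j i₀) ≤ s := min_le_left _ _
        have hsL' : treeHt lam ≤ s := by linarith
        have hs_eq : s = treeHt lam := le_antisymm hsL hsL'
        have hh'_eq : h' = treeHt lam := le_antisymm h'L (hs_eq ▸ hsh)
        apply hy
        rw [Set.mem_singleton_iff, ← hye, ← hz, hs_eq, hh'_eq]
      · exact ⟨0, ⟨le_rfl, h'0⟩, (hroot j i₀ ▸ rfl : p j 0 = p i₀ 0)⟩
      · exact ⟨h', ⟨h'0, le_rfl⟩, hye⟩
      · refine IsPreconnected.image isPreconnected_Icc (p j) ?_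
        refine LipschitzOnWith.continuousOn (K := 1) ?_
        refine LipschitzOnWith.of_dist_le_mul ?_
        intro a ha b hb
        rw [hself j a b ha.1 (ha.2.trans h'L) hb.1 (hb.2.trans h'L), Real.dist_eq]
        simp
end

section
/- For λ ∈ (0,1), the normalized measures b_n^{-1} μ_n on the binary tree T_n ⊂ T converge weakly to μ_Σ as n → ∞. -/
open scoped Classical

/-- Extension of a finite word `w ∈ {0,1}ⁿ` by an infinite string of `0`s. -/
def extendWord {n : ℕ} (w : Fin n → Bool) : ℕ → Bool :=
  fun k => if h : k < n then w ⟨k, h⟩ else false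

/-- `b_n = μ_n(T_n) = (4λ/(2-λ))((2/λ)ⁿ-1)`. -/
noncomputable def treeMass (lam : ℝ) (n : ℕ) : ℝ :=
  (4 * lam / (2 - lam)) * ((2 / lam) ^ n - 1)

/-- The integral `μ_n(f)` of `f` against the measure `μ_n` on the vertices of `T_n ⊂ T`:
the root has mass `2`, a vertex at depth `1 ≤ m ≤ n-1` has mass `λ^{-(m-1)}+2λ^{-m}`, and
a vertex at depth `n` has mass `λ^{-(n-1)}`. -/
noncomputable def muInt (lam : ℝ) {T : Type*} [MetricSpace T]
    (p : (ℕ → Bool) → ℝ → T) (n : ℕ) (f : T → ℝ) : ℝ :=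
  2 * f (p (fun _ => false) 0) +
    (∑ m ∈ Finset.Icc 1 (n - 1), ∑ w : Fin m → Bool,
      ((lam ^ (m - 1))⁻¹ + 2 * (lam ^ m)⁻¹) * f (p (extendWord w) (vertexHt lam m))) +
    ∑ w : Fin n → Bool, (lam ^ (n - 1))⁻¹ * f (p (extendWord w) (vertexHt lam n))

/-!
Let `A_k` be the mean of `f` over the `2^k` vertices at depth `k`. Counting each edge's
conductance at both of its endpoints gives `μ_n(f) = Σ_{k<n} 4 (2/λ)^k (A_k + A_{k+1})/2` and
`b_n = Σ_{k<n} 4 (2/λ)^k`, so `b_n⁻¹ μ_n(f)` is a weighted Cesàro mean of `(A_k + A_{k+1})/2`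
with divergent total weight. Since the depth-`k` vertex of a ray depends only on its first `k`
letters, `A_k = ∫ f(p(i, h_k)) dμ_Σ(i)`, and as the height `h_k` tends to the total height `L`
these integrals converge to `∫ f(p(i, L)) dμ_Σ(i)` by dominated convergence: the
parametrization `p` is continuous on the compact set `Σ × [0, L]`.
-/

open MeasureTheory Filter Topology Finset Asymptotics

theorem Filter.Tendsto.cesaro_weighted {g a : ℕ → ℝ} {l : ℝ} (ha : Tendsto a atTop (𝓝 l))
    (hg : 0 ≤ g) (hG : Tendsto (fun n => ∑ i ∈ range n, g i) atTop atTop) :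
    Tendsto (fun n => (∑ i ∈ range n, g i * a i) / ∑ i ∈ range n, g i) atTop (𝓝 l) := by
  have hsmall : (fun i => g i * (a i - l)) =o[atTop] g := by
    simpa using (isBigO_refl g atTop).mul_isLittleO
      ((isLittleO_one_iff ℝ).2 (tendsto_sub_nhds_zero_iff.2 ha))
  have := ((hsmall.sum_range hg hG).tendsto_div_nhds_zero).add_const l
  rw [zero_add] at this
  refine this.congr' ?_
  filter_upwards [hG.eventually_gt_atTop 0] with n hn
  simp only [mul_sub, sum_sub_distrib, ← sum_mul]
  field_simp
  ring

section TreeGeometry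

variable {lam : ℝ}

lemma vertexHt_eq_sum_range (hlam : lam ≠ 1) (n : ℕ) :
    vertexHt lam n = ∑ k ∈ range n, lam ^ k := by
  rw [geom_sum_eq hlam, vertexHt, ← neg_div_neg_eq, neg_sub, neg_sub]

lemma treeHt_sub_vertexHt (n : ℕ) :
    treeHt lam - vertexHt lam n = lam ^ n / (1 - lam) := by
  rw [treeHt, vertexHt, ← sub_div, sub_sub_cancel]

lemma vertexHt_mem_Icc (hlam : lam ∈ Set.Ioo 0 1) (n : ℕ) :
    vertexHt lam n ∈ Set.Icc 0 (treeHt lam) := by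
  have h1 : 0 < 1 - lam := sub_pos.2 hlam.2
  have hn : 0 ≤ lam ^ n := pow_nonneg hlam.1.le n
  refine ⟨div_nonneg (sub_nonneg.2 (pow_le_one₀ hlam.1.le hlam.2.le)) h1.le, ?_⟩
  rw [vertexHt, treeHt]
  gcongr
  linarith

lemma treeHt_mem_Icc (hlam : lam < 1) : treeHt lam ∈ Set.Icc 0 (treeHt lam) :=
  ⟨one_div_nonneg.2 (sub_nonneg.2 hlam.le), le_rfl⟩

lemma tendsto_vertexHt (hlam : lam ∈ Set.Ioo 0 1) :
    Tendsto (vertexHt lam) atTop (𝓝 (treeHt lam)) := by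
  unfold vertexHt
  simpa [treeHt] using
    ((tendsto_pow_atTop_nhds_zero_of_lt_one hlam.1.le hlam.2).const_sub 1).div_const (1 - lam)

lemma vertexHt_le_branchHt (hlam : lam ∈ Set.Ioo 0 1) {n : ℕ} {i j : ℕ → Bool}
    (hij : ∀ m < n, i m = j m) : vertexHt lam n ≤ branchHt lam i j := by
  have hlam0 := hlam.1.le
  have hterm : ∀ k, 0 ≤ (if ∀ m ≤ k, i m = j m then lam ^ k else 0) := fun k => by
    split_ifs <;> positivity
  have hsumm : Summable fun k => if ∀ m ≤ k, i m = j m then lam ^ k else 0 :=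
    (summable_geometric_of_lt_one hlam.1.le hlam.2).of_nonneg_of_le hterm fun k => by
      split_ifs <;> simp [hlam0]
  rw [vertexHt_eq_sum_range hlam.2.ne, branchHt]
  refine le_of_eq_of_le (sum_congr rfl fun k hk => ?_) (hsumm.sum_le_tsum _ fun k _ => hterm k)
  rw [if_pos fun m hm => hij m (hm.trans_lt (mem_range.1 hk))]

end TreeGeometry

section FairCoin

variable {μC : Measure (ℕ → Bool)}

lemma measure_prefix_preimage
    (hcyl : ∀ w : List Bool,
      μC {i : ℕ → Bool | ∀ m < w.length, i m = w.getD m false} = (2 : ENNReal)⁻¹ ^ w.length)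
    {m : ℕ} (w : Fin m → Bool) : μC ((fun i (k : Fin m) => i k) ⁻¹' {w}) = 2⁻¹ ^ m := by
  convert hcyl (List.ofFn w) using 2
  · ext i
    simp only [Set.mem_preimage, Set.mem_singleton_iff, funext_iff, List.length_ofFn,
      Set.mem_ofPred_eq]
    refine ⟨fun hi k hk => ?_, fun hi k => ?_⟩
    · rw [List.getD_eq_getElem _ _ (by simpa using hk), List.getElem_ofFn]
      exact hi ⟨k, hk⟩
    · have := hi k k.2
      rwa [List.getD_eq_getElem _ _ (by simp), List.getElem_ofFn] at this
  · simp

lemma integral_comp_prefix [IsFiniteMeasure μC]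
    (hcyl : ∀ w : List Bool,
      μC {i : ℕ → Bool | ∀ m < w.length, i m = w.getD m false} = (2 : ENNReal)⁻¹ ^ w.length)
    {m : ℕ} (F : (Fin m → Bool) → ℝ) :
    ∫ i, F (fun k : Fin m => i k) ∂μC = 2⁻¹ ^ m * ∑ w, F w := by
  have hmeas : Measurable fun (i : ℕ → Bool) (k : Fin m) => i k :=
    measurable_pi_lambda _ fun k => measurable_pi_apply _
  rw [← integral_map hmeas.aemeasurable (Integrable.of_finite.aestronglyMeasurable),
    integral_fintype .of_finite, mul_sum]
  refine sum_congr rfl fun w _ => ?_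
  rw [measureReal_def, Measure.map_apply hmeas (measurableSet_singleton w),
    measure_prefix_preimage hcyl, smul_eq_mul]
  simp

end FairCoin

section VertexMeasure

variable {T : Type*} [MetricSpace T]

noncomputable def levelSum (lam : ℝ) (p : (ℕ → Bool) → ℝ → T) (f : T → ℝ) (m : ℕ) : ℝ :=
  ∑ w : Fin m → Bool, f (p (extendWord w) (vertexHt lam m))

lemma muInt_eq_levelSum (lam : ℝ) (p : (ℕ → Bool) → ℝ → T) (f : T → ℝ) (n : ℕ) :
    muInt lam p n f = 2 * levelSum lam p f 0 +
      ∑ m ∈ Icc 1 (n - 1), ((lam ^ (m - 1))⁻¹ + 2 * (lam ^ m)⁻¹) * levelSum lam p f m +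
      (lam ^ (n - 1))⁻¹ * levelSum lam p f n := by
  have hroot : levelSum lam p f 0 = f (p (fun _ => false) 0) := by
    simp only [levelSum, Fintype.sum_unique, vertexHt, pow_zero, sub_self, zero_div]
    rfl
  rw [muInt, hroot]
  simp only [levelSum, mul_sum]

/-- Each of the `2^(k+1)` edges between depths `k` and `k+1` has conductance `λ^{-k}` and
contributes it to both of its endpoints. -/
lemma muInt_eq_sum_range (lam : ℝ) (p : (ℕ → Bool) → ℝ → T) (f : T → ℝ) {n : ℕ} (hn : n ≠ 0) :
    muInt lam p n f = ∑ k ∈ range n,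
      (lam ^ k)⁻¹ * (2 * levelSum lam p f k + levelSum lam p f (k + 1)) := by
  obtain ⟨n, rfl⟩ := Nat.exists_eq_add_one_of_ne_zero hn
  induction n with
  | zero => simp [muInt_eq_levelSum]
  | succ n ih =>
    rw [sum_range_succ, ← ih n.succ_ne_zero, muInt_eq_levelSum, muInt_eq_levelSum,
      Nat.add_sub_cancel, Nat.add_sub_cancel, sum_Icc_succ_top (Nat.le_add_left 1 n),
      Nat.add_sub_cancel]
    ring

lemma treeMass_eq_sum_range {lam : ℝ} (h0 : lam ≠ 0) (h2 : lam ≠ 2) (n : ℕ) :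
    treeMass lam n = ∑ k ∈ range n, 4 * (2 / lam) ^ k := by
  have h2' : 2 - lam ≠ 0 := sub_ne_zero.2 h2.symm
  rw [← mul_sum, geom_sum_eq (by rwa [ne_eq, div_eq_one_iff_eq h0, eq_comm]), treeMass]
  field_simp

end VertexMeasure

namespace IsTreeParam

variable {lam : ℝ} {T : Type*} [MetricSpace T] {p : (ℕ → Bool) → ℝ → T}

lemma eq_of_forall_lt_eq (hp : IsTreeParam lam p) (hlam : lam ∈ Set.Ioo 0 1) {n : ℕ}
    {i j : ℕ → Bool} (hij : ∀ m < n, i m = j m) : p i (vertexHt lam n) = p j (vertexHt lam n) := by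
  rw [← dist_eq_zero, hp.dist_eq i j _ _ (vertexHt_mem_Icc hlam n) (vertexHt_mem_Icc hlam n),
    treeDist, min_self, min_eq_left (vertexHt_le_branchHt hlam hij)]
  ring

lemma dist_le (hp : IsTreeParam lam p) (hlam : lam ∈ Set.Ioo 0 1) {n : ℕ} {i j : ℕ → Bool}
    {h h' : ℝ} (hh : h ∈ Set.Icc 0 (treeHt lam)) (hh' : h' ∈ Set.Icc 0 (treeHt lam))
    (hij : ∀ m < n, i m = j m) :
    dist (p i h) (p j h') ≤ |h - h'| + 2 * (lam ^ n / (1 - lam)) := by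
  have hb : min (min h h') (vertexHt lam n) ≤ min (min h h') (branchHt lam i j) :=
    min_le_min_left _ (vertexHt_le_branchHt hlam hij)
  have hmin : min h h' ≤ treeHt lam := (min_le_left _ _).trans hh.2
  rw [hp.dist_eq i j h h' hh hh', treeDist, ← treeHt_sub_vertexHt, abs_sub_comm,
    ← max_sub_min_eq_abs, ← min_add_max h h']
  have hvL := (vertexHt_mem_Icc hlam n).2
  rcases min_cases (min h h') (vertexHt lam n) with ⟨hm, -⟩ | ⟨hm, -⟩ <;> linarith

lemma continuousOn (hp : IsTreeParam lam p) (hlam : lam ∈ Set.Ioo 0 1) :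
    ContinuousOn (fun z : (ℕ → Bool) × ℝ => p z.1 z.2) (Set.univ ×ˢ Set.Icc 0 (treeHt lam)) := by
  rintro ⟨i, h⟩ ⟨-, hh⟩
  refine Metric.tendsto_nhds.2 fun ε hε => ?_
  obtain ⟨N, hN⟩ : ∃ N : ℕ, 2 * (lam ^ N / (1 - lam)) < ε / 2 :=
    (((tendsto_pow_atTop_nhds_zero_of_lt_one hlam.1.le hlam.2).div_const (1 - lam)).const_mul
      2 |>.eventually (gt_mem_nhds (by simpa using half_pos hε))).exists
  have hprefix : ∀ᶠ j in 𝓝 i, ∀ m < N, j m = i m :=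
    (eventually_all_finite (Set.finite_lt_nat N)).2 fun m _ =>
      tendsto_pure.1 (nhds_discrete Bool ▸ (continuous_apply m).tendsto i)
  have hheight : ∀ᶠ h' in 𝓝 h, dist h' h < ε / 2 :=
    Metric.eventually_nhds_iff.2 ⟨_, half_pos hε, fun _ hy => hy⟩
  filter_upwards [nhdsWithin_le_nhds (hprefix.prod_nhds hheight), self_mem_nhdsWithin]
    with z ⟨hzi, hzh⟩ hz
  have := hp.dist_le hlam hz.2 hh hzi
  rw [← Real.dist_eq] at this
  linarith

lemma continuous_apply_height (hp : IsTreeParam lam p) (hlam : lam ∈ Set.Ioo 0 1) {h : ℝ}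
    (hh : h ∈ Set.Icc 0 (treeHt lam)) : Continuous fun i => p i h :=
  (hp.continuousOn hlam).comp_continuous (Continuous.prodMk_left h) fun _ => ⟨trivial, hh⟩

lemma tendsto_integral_vertexHt (hp : IsTreeParam lam p) (hlam : lam ∈ Set.Ioo 0 1)
    (μ : Measure (ℕ → Bool)) [IsFiniteMeasure μ]
    {f : T → ℝ} (hf : Continuous f) :
    Tendsto (fun m => ∫ i, f (p i (vertexHt lam m)) ∂μ) atTop
      (𝓝 (∫ i, f (p i (treeHt lam)) ∂μ)) := by
  have hcont := hp.continuousOn hlam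
  obtain ⟨C, hC⟩ := ((isCompact_univ.prod isCompact_Icc).image_of_continuousOn hcont)
    |>.exists_bound_of_continuousOn hf.continuousOn
  refine tendsto_integral_of_dominated_convergence (fun _ => C)
    (fun m => (hf.comp (hp.continuous_apply_height hlam (vertexHt_mem_Icc hlam m)))
      |>.aestronglyMeasurable) (integrable_const C)
    (fun m => .of_forall fun i => hC _ ⟨(i, _), ⟨trivial, vertexHt_mem_Icc hlam m⟩, rfl⟩)
    (.of_forall fun i => (hf.tendsto _).comp ?_)
  have hlim : Tendsto (fun m => (i, vertexHt lam m)) atTop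
      (𝓝[Set.univ ×ˢ Set.Icc 0 (treeHt lam)] (i, treeHt lam)) :=
    tendsto_nhdsWithin_iff.2 ⟨tendsto_const_nhds.prodMk_nhds (tendsto_vertexHt hlam),
      .of_forall fun m => ⟨trivial, vertexHt_mem_Icc hlam m⟩⟩
  exact (hcont _ ⟨trivial, treeHt_mem_Icc hlam.2⟩).tendsto.comp hlim

lemma integral_vertexHt_eq (hp : IsTreeParam lam p)
    (hlam : lam ∈ Set.Ioo 0 1) {μC : Measure (ℕ → Bool)} [IsFiniteMeasure μC]
    (hcyl : ∀ w : List Bool,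
      μC {i : ℕ → Bool | ∀ m < w.length, i m = w.getD m false} = (2 : ENNReal)⁻¹ ^ w.length)
    (f : T → ℝ) (m : ℕ) :
    ∫ i, f (p i (vertexHt lam m)) ∂μC = 2⁻¹ ^ m * levelSum lam p f m := by
  rw [levelSum, ← integral_comp_prefix hcyl]
  refine integral_congr_ae (.of_forall fun i => ?_)
  dsimp only
  rw [hp.eq_of_forall_lt_eq hlam (j := extendWord fun k : Fin m => i k)
    fun k hk => by simp [extendWord, hk]]

end IsTreeParam

/-- For `λ ∈ (0,1)`, the normalized measures `b_n⁻¹ μ_n` on the binary trees `T_n ⊂ T`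
converge weakly (tested against continuous functions on `T`) to `μ_Σ`, the image on the
boundary `Σ ⊂ T` of the fair coin-flipping measure. -/
theorem stmt_11 (lam : ℝ) (hlam : lam ∈ Set.Ioo (0 : ℝ) 1)
    {T : Type*} [MetricSpace T] [MeasurableSpace T] [BorelSpace T]
    (p : (ℕ → Bool) → ℝ → T) (hp : IsTreeParam lam p)
    (μC : MeasureTheory.Measure (ℕ → Bool)) (hμC : MeasureTheory.IsProbabilityMeasure μC)
    (hcyl : ∀ w : List Bool,
      μC {i : ℕ → Bool | ∀ m < w.length, i m = w.getD m false} = (2 : ENNReal)⁻¹ ^ w.length) :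
    ∀ f : T → ℝ, Continuous f →
      Filter.Tendsto (fun n : ℕ => (treeMass lam n)⁻¹ * muInt lam p n f) Filter.atTop
        (nhds (∫ x, f x ∂(μC.map (fun i : ℕ → Bool => p i (treeHt lam))))) := by
  intro f hf
  have hA := hp.tendsto_integral_vertexHt hlam μC hf
  have ha : Tendsto (fun k => (∫ i, f (p i (vertexHt lam k)) ∂μC +
      ∫ i, f (p i (vertexHt lam (k + 1))) ∂μC) / 2) atTop (𝓝 (∫ i, f (p i (treeHt lam)) ∂μC)) := by
    simpa using (hA.add (hA.comp (tendsto_add_atTop_nat 1))).div_const 2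
  have hr : 1 ≤ 2 / lam := (one_le_div hlam.1).2 (by linarith [hlam.2])
  have hmass : Tendsto (fun n => ∑ k ∈ range n, 4 * (2 / lam) ^ k) atTop atTop := by
    refine tendsto_atTop_mono (fun n => ?_) tendsto_natCast_atTop_atTop
    simpa using card_nsmul_le_sum (range n) (fun k => 4 * (2 / lam) ^ k) 1
      fun k _ => by linarith [one_le_pow₀ (n := k) hr]
  rw [integral_map (hp.continuous_apply_height hlam (treeHt_mem_Icc hlam.2)).aemeasurable
    hf.aestronglyMeasurable]
  refine (ha.cesaro_weighted (fun k => by positivity) hmass).congr' ?_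
  filter_upwards [eventually_ne_atTop 0] with n hn
  rw [treeMass_eq_sum_range hlam.1.ne' (by linarith [hlam.2]), muInt_eq_sum_range lam p f hn,
    div_eq_inv_mul]
  congr 1
  refine sum_congr rfl fun k _ => ?_
  rw [hp.integral_vertexHt_eq hlam hcyl, hp.integral_vertexHt_eq hlam hcyl, inv_pow, inv_pow,
    div_pow, pow_succ]
  field_simp
  ring
end
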